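/- Let γ ⊂ ℝ^n be the attractor of a self-similar Jordan zipper S = {S_1, ..., S_m}, and suppose γ is an arc of bounded turning with constant M. Let p_min = min_i p_i where p_i is the ratio of S_i. Then for any two distinct points x, y ∈ γ, at least one of the following holds: (1) there exist a multi-index i = i_1...i_k and an index i_{k+1} such that γ_{i i_{k+1}} ⊆ γ_{xy} ⊆ γ_i; or (2) there exist multi-indices i, j with γ_i ∩ γ_j a single common endpoint, and indices i_{k+1}, j_{l+1}, such that γ_{i i_{k+1}} ∪ γ_{j j_{l+1}} ⊆ γ_{xy} ⊆ γ_i ∪ γ_j and γ_{i i_{k+1}} ∩ γ_{j j_{l+1}} = γ_i ∩ γ_j. In either case p_i ≤ M‖x − y‖ / (|γ| p_min) (and in case (2) also p_j ≤ M‖x − y‖ / (|γ| p_min)), where |γ| denotes diam(γ). -/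

import Mathlib

open Set Metric

/-- `S i`, for `i < m`, is a contracting similarity with ratio `r i ∈ (0,1)`. -/
def IsSimilaritySystem {X : Type*} [MetricSpace X] (m : ℕ)
    (S : ℕ → X → X) (r : ℕ → ℝ) : Prop :=
  ∀ i < m, 0 < r i ∧ r i < 1 ∧ ∀ x y, dist (S i x) (S i y) = r i * dist x y

/-- Self-similar zipper with maps `S 0, …, S (m-1)`, ratios `r`, vertices `z 0, …, z m`,
signature `ε` (values in `{0,1}`).  Here `S i` plays the role of the map `S_{i+1}` of the
paper, so the zipper conditions read `S i (z 0) = z (i + ε i)` and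
`S i (z m) = z (i + 1 - ε i)`. -/
def IsZipper {X : Type*} [MetricSpace X] (m : ℕ)
    (S : ℕ → X → X) (r : ℕ → ℝ) (z : ℕ → X) (ε : ℕ → ℕ) : Prop :=
  1 ≤ m ∧ IsSimilaritySystem m S r ∧ (∀ i < m, ε i ≤ 1) ∧
    ∀ i < m, S i (z 0) = z (i + ε i) ∧ S i (z m) = z (i + 1 - ε i)

/-- Linear zipper on `[0,1]`, with vertices `0 = t 0 < t 1 < … < t m = 1`. -/
def IsLinearZipper (m : ℕ) (T : ℕ → ℝ → ℝ) (r : ℕ → ℝ) (t : ℕ → ℝ) (ε : ℕ → ℕ) : Prop :=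
  IsZipper m T r t ε ∧ t 0 = 0 ∧ t m = 1 ∧ ∀ i < m, t i < t (i + 1)

/-- `K` is the attractor of the iterated function system `{S i : i < m}`. -/
def IsAttractor {X : Type*} [MetricSpace X] (m : ℕ) (S : ℕ → X → X) (K : Set X) : Prop :=
  K.Nonempty ∧ IsCompact K ∧ K = ⋃ i ∈ Finset.range m, S i '' K

/-- `g` is a structural parametrization of the zipper `S` (with vertices `z`)
relative to the linear zipper `T` (with vertices `t`). -/
def IsStructuralParam {X : Type*} [MetricSpace X] (m : ℕ) (S : ℕ → X → X)
    (T : ℕ → ℝ → ℝ) (t : ℕ → ℝ) (z : ℕ → X) (g : ℝ → X) : Prop :=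
  ContinuousOn g (Icc 0 1) ∧ (∀ i ≤ m, g (t i) = z i) ∧
    ∀ i < m, ∀ x ∈ Icc (0:ℝ) 1, S i (g x) = g (T i x)

/-- A Jordan zipper: a zipper whose attractor `γ` is a Jordan arc, i.e. some structural
parametrization is injective on `[0,1]` (hence a homeomorphism onto `γ`). -/
def IsJordanZipper {X : Type*} [MetricSpace X] (m : ℕ) (S : ℕ → X → X) (r : ℕ → ℝ)
    (z : ℕ → X) (ε : ℕ → ℕ) (γ : Set X) : Prop :=
  IsZipper m S r z ε ∧ IsAttractor m S γ ∧
    ∃ T rT t g, IsLinearZipper m T rT t ε ∧ IsStructuralParam m S T t z g ∧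
      InjOn g (Icc 0 1) ∧ g '' Icc 0 1 = γ

/-- `g` is an injective continuous parametrization of the arc `γ` by `[0,1]`. -/
def IsArcParam {X : Type*} [MetricSpace X] (γ : Set X) (g : ℝ → X) : Prop :=
  ContinuousOn g (Icc 0 1) ∧ InjOn g (Icc 0 1) ∧ g '' Icc 0 1 = γ

/-- Bounded turning with constant `M`: every subarc `γ_{xy}` (expressed via any
parametrization of the arc) has diameter at most `M‖x - y‖`. -/
def BoundedTurning {X : Type*} [MetricSpace X] (γ : Set X) (M : ℝ) : Prop :=
  0 < M ∧ ∀ g : ℝ → X, IsArcParam γ g →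
    ∀ s ∈ Icc (0:ℝ) 1, ∀ u ∈ Icc (0:ℝ) 1, diam (g '' uIcc s u) ≤ M * dist (g s) (g u)

/-- `f` agrees with the systems `S` and `S'` on `γ`: `f ∘ S i = S' i ∘ f` on `γ`. -/
def Agrees {X Y : Type*} [MetricSpace X] [MetricSpace Y] (m : ℕ)
    (S : ℕ → X → X) (S' : ℕ → Y → Y) (γ : Set X) (f : X → Y) : Prop :=
  ∀ i < m, ∀ x ∈ γ, f (S i x) = S' i (f x)

/-- `f` restricts to a homeomorphism of the compact set `γ` onto `γ'`. -/
def IsHomeoOnto {X Y : Type*} [MetricSpace X] [MetricSpace Y]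
    (γ : Set X) (γ' : Set Y) (f : X → Y) : Prop :=
  ContinuousOn f γ ∧ InjOn f γ ∧ f '' γ = γ'

/-- Composition `S_{i₁} ∘ … ∘ S_{i_k}` along a multi-index (a list). -/
def compS {X : Type*} (S : ℕ → X → X) : List ℕ → X → X
  | [] => id
  | i :: l => S i ∘ compS S l

/-- Product of the ratios along a multi-index. -/
def ratioProd (p : ℕ → ℝ) (l : List ℕ) : ℝ := (l.map p).prod

/-!
The structural parametrization `h` conjugates the zipper to a linear zipper `T` on `[0,1]`, so
it suffices to squeeze a subinterval `[a,b]` of `[0,1]` between the cells `T_w [0,1]`. Pulling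
`[a,b]` back through the first-level cells that contain it stretches it by at least
`1 / max rT` each time, so this stops at an interval `[a',b']` straddling a vertex `t_{i+1}`.
Either `[a',b']` contains a whole first-level cell (case 1), or it splits at `t_{i+1}` into two
pieces, each reaching an endpoint of a first-level cell. Running the same pull-back on such a
piece ends at an interval with an endpoint `0` or `1`, which contains the first-level cell at
that end; this gives a cell containing the piece with a child inside it at the vertex
(case 2). Finally `p_w p_min |γ| ≤ diam γ_{w i} ≤ diam γ_{xy} ≤ M ‖x - y‖`.
-/

section Words

variable {X : Type*} {m : ℕ}

@[simp]
theorem compS_nil (S : ℕ → X → X) : compS S [] = id := rfl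

@[simp]
theorem compS_cons (S : ℕ → X → X) (i : ℕ) (w : List ℕ) :
    compS S (i :: w) = S i ∘ compS S w := rfl

theorem compS_append (S : ℕ → X → X) (v w : List ℕ) :
    compS S (v ++ w) = compS S v ∘ compS S w := by
  induction v with
  | nil => rfl
  | cons i v ih => simp [ih, Function.comp_assoc]

theorem image_compS_image (S : ℕ → X → X) (v w : List ℕ) (A : Set X) :
    compS S v '' (compS S w '' A) = compS S (v ++ w) '' A := by
  rw [compS_append, image_comp]

theorem forall_mem_append_singleton {α : Type*} {P : α → Prop} {w : List α} {i : α}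
    (hw : ∀ j ∈ w, P j) (hi : P i) : ∀ j ∈ w ++ [i], P j :=
  List.forall_mem_append.2 ⟨hw, List.forall_mem_singleton.2 hi⟩

theorem ratioProd_pos {p : ℕ → ℝ} (hp : ∀ i < m, 0 < p i) {w : List ℕ}
    (hw : ∀ j ∈ w, j < m) : 0 < ratioProd p w :=
  List.prod_pos fun _ hx => by
    obtain ⟨j, hj, rfl⟩ := List.mem_map.1 hx
    exact hp j (hw j hj)

end Words

section Diam

variable {X : Type*} [MetricSpace X]

theorem mul_diam_le_diam_image {f : X → X} {r : ℝ} (hr : 0 < r)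
    (hf : ∀ x y, dist (f x) (f y) = r * dist x y) {A : Set X}
    (hA : Bornology.IsBounded (f '' A)) : r * diam A ≤ diam (f '' A) := by
  rw [mul_comm, ← le_div_iff₀ hr]
  refine diam_le_of_forall_dist_le (div_nonneg diam_nonneg hr.le) fun x hx y hy => ?_
  rw [le_div_iff₀ hr, mul_comm, ← hf]
  exact dist_le_diam_of_mem hA (mem_image_of_mem f hx) (mem_image_of_mem f hy)

end Diam

namespace IsSimilaritySystem

variable {X : Type*} [MetricSpace X] {m : ℕ} {S : ℕ → X → X} {p : ℕ → ℝ}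

theorem dist_compS (hS : IsSimilaritySystem m S p) {w : List ℕ} (hw : ∀ j ∈ w, j < m)
    (x y : X) : dist (compS S w x) (compS S w y) = ratioProd p w * dist x y := by
  induction w with
  | nil => simp [ratioProd]
  | cons i w ih =>
    rw [List.forall_mem_cons] at hw
    simp only [compS_cons, Function.comp_apply, (hS i hw.1).2.2, ih hw.2, ratioProd,
      List.map_cons, List.prod_cons, mul_assoc]

theorem injective_compS (hS : IsSimilaritySystem m S p) {w : List ℕ} (hw : ∀ j ∈ w, j < m) :
    Function.Injective (compS S w) := fun x y hxy => by
  have hpos := ratioProd_pos (fun i hi => (hS i hi).1) hw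
  simpa [hxy, hpos.ne'] using (hS.dist_compS hw x y).symm

theorem continuous_compS (hS : IsSimilaritySystem m S p) {w : List ℕ} (hw : ∀ j ∈ w, j < m) :
    Continuous (compS S w) :=
  (LipschitzWith.of_dist_le_mul fun x y => by
    rw [hS.dist_compS hw, Real.coe_toNNReal _ (ratioProd_pos (fun i hi => (hS i hi).1) hw).le]
    : LipschitzWith (ratioProd p w).toNNReal (compS S w)).continuous

theorem ratioProd_le_of_image_subset (hS : IsSimilaritySystem m S p) {K U : Set X}
    (hU : Bornology.IsBounded U) {w : List ℕ} {i : ℕ} (hw : ∀ j ∈ w, j < m) (hi : i < m)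
    (hsub : compS S (w ++ [i]) '' K ⊆ U)
    {pmin C : ℝ} (hpmin : IsLeast (p '' {i | i < m}) pmin) (hK : 0 < diam K)
    (hC : diam U ≤ C) : ratioProd p w ≤ C / (diam K * pmin) := by
  have hpos : ∀ j < m, 0 < p j := fun j hj => (hS j hj).1
  have hwi := forall_mem_append_singleton hw hi
  obtain ⟨j₀, hj₀, rfl⟩ := hpmin.1
  have hmin : p j₀ ≤ p i := hpmin.2 ⟨i, hi, rfl⟩
  have hw0 := ratioProd_pos hpos hw
  rw [le_div_iff₀ (mul_pos hK (hpos j₀ hj₀))]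
  calc ratioProd p w * (diam K * p j₀) ≤ ratioProd p w * (diam K * p i) :=
        mul_le_mul_of_nonneg_left (mul_le_mul_of_nonneg_left hmin hK.le) hw0.le
    _ = ratioProd p (w ++ [i]) * diam K := by simp [ratioProd]; ring
    _ ≤ diam (compS S (w ++ [i]) '' K) :=
        mul_diam_le_diam_image (ratioProd_pos hpos hwi) (hS.dist_compS hwi) (hU.subset hsub)
    _ ≤ diam U := diam_mono hsub hU
    _ ≤ C := hC

end IsSimilaritySystem

section RealLine

theorem ContinuousOn.image_uIcc_of_injOn {f : ℝ → ℝ} {a b : ℝ} (hf : ContinuousOn f (uIcc a b))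
    (hinj : InjOn f (uIcc a b)) : f '' uIcc a b = uIcc (f a) (f b) :=
  (hf.strictMonoOn_of_injOn_Icc' inf_le_sup hinj).elim
    (fun hmono => hf.image_uIcc_of_monotoneOn hmono.monotoneOn)
    (fun hanti => hf.image_uIcc_of_antitoneOn hanti.antitoneOn)

theorem inter_eq_singleton_of_subset_Iic_of_subset_Ici {α : Type*} [PartialOrder α]
    {A B : Set α} {c : α} (hA : A ⊆ Iic c) (hB : B ⊆ Ici c) (hcA : c ∈ A) (hcB : c ∈ B) :
    A ∩ B = {c} :=
  eq_singleton_iff_unique_mem.2 ⟨⟨hcA, hcB⟩, fun _ hx => le_antisymm (hA hx.1) (hB hx.2)⟩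

variable {m : ℕ} {S : ℕ → ℝ → ℝ} {p : ℕ → ℝ}

theorem IsSimilaritySystem.image_compS_uIcc (hS : IsSimilaritySystem m S p) {w : List ℕ}
    (hw : ∀ j ∈ w, j < m) (x y : ℝ) :
    compS S w '' uIcc x y = uIcc (compS S w x) (compS S w y) :=
  (hS.continuous_compS hw).continuousOn.image_uIcc_of_injOn (hS.injective_compS hw).injOn

theorem IsSimilaritySystem.image_uIcc (hS : IsSimilaritySystem m S p) {i : ℕ} (hi : i < m)
    (x y : ℝ) : S i '' uIcc x y = uIcc (S i x) (S i y) := by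
  simpa using hS.image_compS_uIcc (w := [i]) (by simpa) x y

end RealLine

section Squeezed

variable {X Y : Type*}

/-- Case (1) of the dichotomy, for the cells `compS S w '' K`. -/
def SqueezedInCell (m : ℕ) (S : ℕ → X → X) (K U : Set X) : Prop :=
  ∃ (w : List ℕ) (i : ℕ), (∀ j ∈ w, j < m) ∧ i < m ∧
    compS S (w ++ [i]) '' K ⊆ U ∧ U ⊆ compS S w '' K

/-- Case (2) of the dichotomy, for the cells `compS S w '' K`; `E` is the set of endpoints
of `K`. -/
def SqueezedInCellPair (m : ℕ) (S : ℕ → X → X) (K E U : Set X) : Prop :=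
  ∃ (w₁ w₂ : List ℕ) (i₁ j₁ : ℕ), (∀ j ∈ w₁, j < m) ∧ (∀ j ∈ w₂, j < m) ∧ i₁ < m ∧ j₁ < m ∧
    (∃ pt, compS S w₁ '' K ∩ compS S w₂ '' K = {pt} ∧
      pt ∈ compS S w₁ '' E ∧ pt ∈ compS S w₂ '' E) ∧
    compS S (w₁ ++ [i₁]) '' K ∪ compS S (w₂ ++ [j₁]) '' K ⊆ U ∧
    U ⊆ compS S w₁ '' K ∪ compS S w₂ '' K ∧
    compS S (w₁ ++ [i₁]) '' K ∩ compS S (w₂ ++ [j₁]) '' K =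
      compS S w₁ '' K ∩ compS S w₂ '' K

variable {m : ℕ} {S : ℕ → X → X} {S' : ℕ → Y → Y} {f : X → Y} {K E U : Set X} {K' E' : Set Y}
  {w₀ : List ℕ}

theorem SqueezedInCell.image (hw₀ : ∀ j ∈ w₀, j < m)
    (hK : ∀ v, (∀ j ∈ v, j < m) → f '' (compS S v '' K) = compS S' (w₀ ++ v) '' K')
    (h : SqueezedInCell m S K U) : SqueezedInCell m S' K' (f '' U) := by
  obtain ⟨w, i, hw, hi, hsub, hsup⟩ := h
  refine ⟨w₀ ++ w, i, List.forall_mem_append.2 ⟨hw₀, hw⟩, hi, ?_, ?_⟩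
  · rw [List.append_assoc, ← hK _ (forall_mem_append_singleton hw hi)]
    exact image_mono hsub
  · rw [← hK _ hw]; exact image_mono hsup

theorem SqueezedInCellPair.image (hw₀ : ∀ j ∈ w₀, j < m) (hf : InjOn f K)
    (hcell : ∀ v, (∀ j ∈ v, j < m) → compS S v '' K ⊆ K)
    (hK : ∀ v, (∀ j ∈ v, j < m) → f '' (compS S v '' K) = compS S' (w₀ ++ v) '' K')
    (hE : ∀ v, (∀ j ∈ v, j < m) → f '' (compS S v '' E) = compS S' (w₀ ++ v) '' E')
    (h : SqueezedInCellPair m S K E U) : SqueezedInCellPair m S' K' E' (f '' U) := by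
  obtain ⟨w₁, w₂, i₁, j₁, hw₁, hw₂, hi₁, hj₁, ⟨pt, hpt, hpt₁, hpt₂⟩, hsub, hsup, hcap⟩ := h
  have hwi₁ := forall_mem_append_singleton hw₁ hi₁
  have hwj₂ := forall_mem_append_singleton hw₂ hj₁
  have himage_inter : ∀ v v', (∀ j ∈ v, j < m) → (∀ j ∈ v', j < m) →
      f '' (compS S v '' K ∩ compS S v' '' K) =
        compS S' (w₀ ++ v) '' K' ∩ compS S' (w₀ ++ v') '' K' := fun v v' hv hv' => by
    rw [hf.image_inter (hcell v hv) (hcell v' hv'), hK v hv, hK v' hv']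
  refine ⟨w₀ ++ w₁, w₀ ++ w₂, i₁, j₁, List.forall_mem_append.2 ⟨hw₀, hw₁⟩,
    List.forall_mem_append.2 ⟨hw₀, hw₂⟩, hi₁, hj₁,
    ⟨f pt, ?_, (hE w₁ hw₁) ▸ mem_image_of_mem f hpt₁, (hE w₂ hw₂) ▸ mem_image_of_mem f hpt₂⟩,
    ?_, ?_, ?_⟩
  · rw [← himage_inter _ _ hw₁ hw₂, hpt, image_singleton]
  · rw [List.append_assoc, List.append_assoc, ← hK _ hwi₁, ← hK _ hwj₂, ← image_union]
    exact image_mono hsub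
  · rw [← hK _ hw₁, ← hK _ hw₂, ← image_union]
    exact image_mono hsup
  · rw [List.append_assoc, List.append_assoc, ← himage_inter _ _ hwi₁ hwj₂, hcap,
      himage_inter _ _ hw₁ hw₂]

end Squeezed

namespace IsLinearZipper

variable {m : ℕ} {T : ℕ → ℝ → ℝ} {rT : ℕ → ℝ} {t : ℕ → ℝ} {ε : ℕ → ℕ}

theorem pos (hL : IsLinearZipper m T rT t ε) : 0 < m := hL.1.1

theorem isSimilaritySystem (hL : IsLinearZipper m T rT t ε) : IsSimilaritySystem m T rT :=
  hL.1.2.1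

theorem t_zero (hL : IsLinearZipper m T rT t ε) : t 0 = 0 := hL.2.1

theorem t_eq_one (hL : IsLinearZipper m T rT t ε) : t m = 1 := hL.2.2.1

theorem t_lt_succ (hL : IsLinearZipper m T rT t ε) {i : ℕ} (hi : i < m) : t i < t (i + 1) :=
  hL.2.2.2 i hi

theorem vertices (hL : IsLinearZipper m T rT t ε) {i : ℕ} (hi : i < m) :
    (T i 0 = t i ∧ T i 1 = t (i + 1)) ∨ (T i 0 = t (i + 1) ∧ T i 1 = t i) := by
  obtain ⟨⟨-, -, hε, hz⟩, ht0, htm, -⟩ := hL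
  have h0 := (hz i hi).1
  have h1 := (hz i hi).2
  rw [ht0] at h0
  rw [htm] at h1
  rcases Nat.le_one_iff_eq_zero_or_eq_one.1 (hε i hi) with h | h <;> simp_all

theorem image_Icc_zero_one (hL : IsLinearZipper m T rT t ε) {i : ℕ} (hi : i < m) :
    T i '' Icc 0 1 = Icc (t i) (t (i + 1)) := by
  rw [← uIcc_of_le zero_le_one, hL.isSimilaritySystem.image_uIcc hi]
  rcases hL.vertices hi with ⟨h0, h1⟩ | ⟨h0, h1⟩
  · rw [h0, h1, uIcc_of_le (hL.t_lt_succ hi).le]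
  · rw [h0, h1, uIcc_of_ge (hL.t_lt_succ hi).le]

theorem image_pair_zero_one (hL : IsLinearZipper m T rT t ε) {i : ℕ} (hi : i < m) :
    T i '' {0, 1} = {t i, t (i + 1)} := by
  rw [image_pair]
  rcases hL.vertices hi with ⟨h0, h1⟩ | ⟨h0, h1⟩
  · rw [h0, h1]
  · rw [h0, h1, pair_comm]

theorem t_mem_Icc (hL : IsLinearZipper m T rT t ε) {i : ℕ} (hi : i ≤ m) :
    t i ∈ Icc (0 : ℝ) 1 := by
  have hmono := (strictMonoOn_Iic_of_lt_succ (ψ := t) (n := m) fun _ => hL.t_lt_succ).monotoneOn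
  rw [← hL.t_zero, ← hL.t_eq_one]
  exact ⟨hmono (Nat.zero_le m) hi (Nat.zero_le i), hmono hi (le_refl m) hi⟩

theorem image_compS_subset (hL : IsLinearZipper m T rT t ε) {w : List ℕ}
    (hw : ∀ j ∈ w, j < m) : compS T w '' Icc 0 1 ⊆ Icc 0 1 := by
  induction w with
  | nil => simp
  | cons i w ih =>
    rw [List.forall_mem_cons] at hw
    rw [compS_cons, image_comp]
    refine (image_mono (ih hw.2)).trans ?_
    rw [hL.image_Icc_zero_one hw.1]
    exact Icc_subset_Icc (hL.t_mem_Icc hw.1.le).1 (hL.t_mem_Icc hw.1).2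

theorem exists_t_le_lt (hL : IsLinearZipper m T rT t ε) {x : ℝ} (h0 : 0 ≤ x) (h1 : x < 1) :
    ∃ i < m, t i ≤ x ∧ x < t (i + 1) := by
  classical
  have hex : ∃ k, x < t k := ⟨m, hL.t_eq_one ▸ h1⟩
  have hk0 : Nat.find hex ≠ 0 := fun h => by
    have := Nat.find_spec hex
    rw [h, hL.t_zero] at this
    linarith
  have hkm : Nat.find hex ≤ m := Nat.find_min' hex (hL.t_eq_one ▸ h1)
  refine ⟨Nat.find hex - 1, by omega, not_lt.1 (Nat.find_min hex (by omega)), ?_⟩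
  rw [Nat.sub_add_cancel (Nat.one_le_iff_ne_zero.2 hk0)]
  exact Nat.find_spec hex

theorem mem_zero_one_of_compS_mem (hL : IsLinearZipper m T rT t ε) {w : List ℕ}
    (hw : ∀ j ∈ w, j < m) {x : ℝ} (hx : x ∈ Icc (0 : ℝ) 1)
    (he : compS T w x ∈ ({0, 1} : Set ℝ)) : x ∈ ({0, 1} : Set ℝ) := by
  have hcell : compS T w '' Icc 0 1 = uIcc (compS T w 0) (compS T w 1) := by
    rw [← uIcc_of_le zero_le_one, hL.isSimilaritySystem.image_compS_uIcc hw]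
  have h0 := hL.image_compS_subset hw (hcell ▸ left_mem_uIcc)
  have h1 := hL.image_compS_subset hw (hcell ▸ right_mem_uIcc)
  have hx' := hcell ▸ mem_image_of_mem (compS T w) hx
  have hend : compS T w x = compS T w 0 ∨ compS T w x = compS T w 1 := by
    rw [mem_uIcc] at hx'
    rcases he with h | h <;> rw [h] at hx' ⊢ <;> rcases hx' with ⟨hl, hr⟩ | ⟨hl, hr⟩ <;>
      first
      | (left; linarith [h0.1, h0.2, h1.1, h1.2])
      | (right; linarith [h0.1, h0.2, h1.1, h1.2])
  have hinj := hL.isSimilaritySystem.injective_compS hw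
  exact hend.imp (fun h => hinj h) (fun h => hinj h)

theorem exists_image_subset_of_straddle (hL : IsLinearZipper m T rT t ε) {a b c : ℝ}
    (ha : 0 ≤ a) (hb : b ≤ 1) (hstr : ∀ i < m, t i ≤ a → t (i + 1) < b)
    (hc : c ∈ Icc a b) (hc01 : c ∈ ({0, 1} : Set ℝ)) :
    ∃ j < m, T j '' Icc 0 1 ⊆ Icc a b ∧ c ∈ T j '' Icc 0 1 := by
  have hm : 0 < m := hL.pos
  rcases hc01 with rfl | rfl
  · have ha0 : t 0 = a := hL.t_zero.trans (le_antisymm hc.1 ha).symm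
    refine ⟨0, hm, ?_, ?_⟩ <;> rw [hL.image_Icc_zero_one hm]
    · exact Icc_subset_Icc ha0.ge (hstr 0 hm ha0.le).le
    · exact ⟨hL.t_zero.le, (hL.t_mem_Icc hm).1⟩
  · have hm1 : m - 1 + 1 = m := by omega
    have hat : a < t (m - 1) := by
      by_contra! h
      have := hstr (m - 1) (by omega) h
      rw [hm1, hL.t_eq_one] at this
      linarith [hc.2]
    refine ⟨m - 1, by omega, ?_, ?_⟩ <;> rw [hL.image_Icc_zero_one (by omega), hm1, hL.t_eq_one]
    · exact Icc_subset_Icc hat.le hc.2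
    · exact ⟨(hL.t_mem_Icc (by omega)).2, le_rfl⟩

theorem exists_straddling_preimage (hL : IsLinearZipper m T rT t ε) {a b : ℝ} (ha : 0 ≤ a)
    (hab : a < b) (hb : b ≤ 1) :
    ∃ w, (∀ j ∈ w, j < m) ∧ ∃ a' b', 0 ≤ a' ∧ a' < b' ∧ b' ≤ 1 ∧
      (∀ i < m, t i ≤ a' → t (i + 1) < b') ∧ compS T w '' Icc a' b' = Icc a b := by
  -- each pull-back stretches the interval by at least `1 / rT i₀`, the inverse of the largest ratio
  obtain ⟨i₀, hi₀, hmax⟩ :=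
    (Finset.range m).exists_max_image rT ⟨0, Finset.mem_range.2 hL.pos⟩
  obtain ⟨hr0, hr1, -⟩ := hL.isSimilaritySystem i₀ (Finset.mem_range.1 hi₀)
  obtain ⟨n, hn⟩ := exists_pow_lt_of_lt_one (sub_pos.2 hab) hr1
  induction n generalizing a b with
  | zero => rw [pow_zero] at hn; linarith
  | succ n ih =>
    by_cases hstr : ∀ i < m, t i ≤ a → t (i + 1) < b
    · exact ⟨[], by simp, a, b, ha, hab, hb, hstr, by simp⟩
    push Not at hstr
    obtain ⟨i, hi, hta, hbt⟩ := hstr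
    have hcell := hL.image_Icc_zero_one hi
    obtain ⟨x, hx, rfl⟩ : a ∈ T i '' Icc 0 1 := hcell ▸ ⟨hta, hab.le.trans hbt⟩
    obtain ⟨y, hy, rfl⟩ : b ∈ T i '' Icc 0 1 := hcell ▸ ⟨hta.trans hab.le, hbt⟩
    have hxy : x ≠ y := by rintro rfl; exact hab.ne rfl
    have hlen : T i y - T i x = rT i * (max x y - min x y) := by
      rw [max_sub_min_eq_abs', ← Real.dist_eq, ← (hL.isSimilaritySystem i hi).2.2, Real.dist_eq,
        abs_sub_comm, abs_of_pos (sub_pos.2 hab)]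
    have hlen' : rT i₀ ^ n < max x y - min x y := by
      have hri := hmax i (Finset.mem_range.2 hi)
      have hL0 : 0 ≤ max x y - min x y := sub_nonneg.2 min_le_max
      rw [pow_succ, hlen] at hn
      by_contra! h
      nlinarith [pow_pos hr0 n]
    obtain ⟨w, hw, a', b', ha', hab', hb', hstr', himg⟩ :=
      ih (le_min hx.1 hy.1) (min_lt_max.2 hxy) (max_le hx.2 hy.2) hlen'
    refine ⟨i :: w, List.forall_mem_cons.2 ⟨hi, hw⟩, a', b', ha', hab', hb', hstr', ?_⟩
    rw [compS_cons, image_comp, himg]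
    exact (hL.isSimilaritySystem.image_uIcc hi x y).trans (uIcc_of_le hab.le)

theorem exists_end_cell (hL : IsLinearZipper m T rT t ε) {x e : ℝ} (hx : x ∈ Icc (0 : ℝ) 1)
    (he : e ∈ ({0, 1} : Set ℝ)) (hxe : x ≠ e) :
    ∃ w, (∀ k ∈ w, k < m) ∧ ∃ j < m, uIcc x e ⊆ compS T w '' Icc 0 1 ∧
      e ∈ compS T w '' {0, 1} ∧ compS T (w ++ [j]) '' Icc 0 1 ⊆ uIcc x e ∧
      e ∈ compS T (w ++ [j]) '' Icc 0 1 := by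
  have he' : e ∈ Icc (0 : ℝ) 1 := by rcases he with rfl | rfl <;> simp
  obtain ⟨w, hw, a', b', ha', hab', hb', hstr, himg⟩ :=
    hL.exists_straddling_preimage (le_min hx.1 he'.1) (min_lt_max.2 hxe) (max_le hx.2 he'.2)
  change compS T w '' Icc a' b' = uIcc x e at himg
  obtain ⟨c, hc, rfl⟩ : e ∈ compS T w '' Icc a' b' := himg ▸ right_mem_uIcc
  have hc01 := hL.mem_zero_one_of_compS_mem hw (Icc_subset_Icc ha' hb' hc) he
  obtain ⟨j, hj, hsub, hcj⟩ := hL.exists_image_subset_of_straddle ha' hb' hstr hc hc01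
  have hchild : compS T (w ++ [j]) '' Icc 0 1 = compS T w '' (T j '' Icc 0 1) := by
    rw [← image_compS_image]; simp
  refine ⟨w, hw, j, hj, ?_, mem_image_of_mem _ hc01, ?_, ?_⟩
  · rw [← himg]; exact image_mono (Icc_subset_Icc ha' hb')
  · rw [hchild, ← himg]; exact image_mono hsub
  · rw [hchild]; exact mem_image_of_mem _ hcj

theorem exists_end_cell_cons (hL : IsLinearZipper m T rT t ε) {i : ℕ} (hi : i < m) {y e : ℝ}
    (hy : y ∈ Icc (t i) (t (i + 1))) (he : e ∈ ({t i, t (i + 1)} : Set ℝ)) (hye : y ≠ e) :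
    ∃ w, (∀ k ∈ i :: w, k < m) ∧ ∃ j < m, uIcc y e ⊆ compS T (i :: w) '' Icc 0 1 ∧
      compS T (i :: w) '' Icc 0 1 ⊆ Icc (t i) (t (i + 1)) ∧ e ∈ compS T (i :: w) '' {0, 1} ∧
      compS T (i :: w ++ [j]) '' Icc 0 1 ⊆ uIcc y e ∧
      e ∈ compS T (i :: w ++ [j]) '' Icc 0 1 := by
  rw [← hL.image_Icc_zero_one hi] at hy ⊢
  rw [← hL.image_pair_zero_one hi] at he
  obtain ⟨x, hx, rfl⟩ := hy
  obtain ⟨e₀, he₀, rfl⟩ := he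
  obtain ⟨w, hw, j, hj, hsup, hend, hsub, hmem⟩ :=
    hL.exists_end_cell hx he₀ fun h => hye (h ▸ rfl)
  simp only [List.cons_append, compS_cons, image_comp]
  rw [← hL.isSimilaritySystem.image_uIcc hi]
  exact ⟨w, List.forall_mem_cons.2 ⟨hi, hw⟩, j, hj, image_mono hsup,
    image_mono (hL.image_compS_subset hw), mem_image_of_mem _ hend, image_mono hsub,
    mem_image_of_mem _ hmem⟩

theorem squeezed_of_straddle (hL : IsLinearZipper m T rT t ε) {a b : ℝ} (ha : 0 ≤ a)
    (hab : a < b) (hb : b ≤ 1) (hstr : ∀ i < m, t i ≤ a → t (i + 1) < b) :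
    SqueezedInCell m T (Icc 0 1) (Icc a b) ∨
      SqueezedInCellPair m T (Icc 0 1) {0, 1} (Icc a b) := by
  obtain ⟨i, hi, hta, hat⟩ := hL.exists_t_le_lt ha (hab.trans_le hb)
  have htb := hstr i hi hta
  have hi1 : i + 1 < m := by
    by_contra! h
    have hm : i + 1 = m := by omega
    rw [hm, hL.t_eq_one] at htb
    linarith
  by_cases hb2 : t (i + 1 + 1) ≤ b
  · refine Or.inl ⟨[], i + 1, by simp, hi1, ?_, by simpa using Icc_subset_Icc ha hb⟩
    simpa [hL.image_Icc_zero_one hi1] using Icc_subset_Icc hat.le hb2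
  push Not at hb2
  obtain ⟨w₁, hw₁, i₁, hi₁, hsup₁, hcell₁, hpt₁, hsub₁, hmem₁⟩ :=
    hL.exists_end_cell_cons hi ⟨hta, hat.le⟩ (Or.inr rfl) hat.ne
  obtain ⟨w₂, hw₂, j₁, hj₁, hsup₂, hcell₂, hpt₂, hsub₂, hmem₂⟩ :=
    hL.exists_end_cell_cons hi1 ⟨htb.le, hb2.le⟩ (Or.inl rfl) htb.ne'
  rw [uIcc_of_le hat.le] at hsup₁ hsub₁
  rw [uIcc_of_ge htb.le] at hsup₂ hsub₂
  have hcap := inter_eq_singleton_of_subset_Iic_of_subset_Ici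
    (hcell₁.trans Icc_subset_Iic_self) (hcell₂.trans Icc_subset_Ici_self)
    (hsup₁ (right_mem_Icc.2 hat.le)) (hsup₂ (left_mem_Icc.2 htb.le))
  have hcap' := inter_eq_singleton_of_subset_Iic_of_subset_Ici
    (hsub₁.trans Icc_subset_Iic_self) (hsub₂.trans Icc_subset_Ici_self) hmem₁ hmem₂
  refine Or.inr ⟨i :: w₁, (i + 1) :: w₂, i₁, j₁, hw₁, hw₂, hi₁, hj₁, ⟨t (i + 1), hcap, hpt₁, hpt₂⟩,
    union_subset (hsub₁.trans (Icc_subset_Icc_right htb.le))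
      (hsub₂.trans (Icc_subset_Icc_left hat.le)), ?_, hcap'.trans hcap.symm⟩
  rw [← Icc_union_Icc_eq_Icc hat.le htb.le]
  exact union_subset_union hsup₁ hsup₂

theorem squeezed_Icc (hL : IsLinearZipper m T rT t ε) {a b : ℝ} (ha : 0 ≤ a) (hab : a < b)
    (hb : b ≤ 1) :
    SqueezedInCell m T (Icc 0 1) (Icc a b) ∨
      SqueezedInCellPair m T (Icc 0 1) {0, 1} (Icc a b) := by
  obtain ⟨w, hw, a', b', ha', hab', hb', hstr, himg⟩ := hL.exists_straddling_preimage ha hab hb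
  have hprefix : ∀ (A : Set ℝ) v, (∀ j ∈ v, j < m) →
      compS T w '' (compS T v '' A) = compS T (w ++ v) '' A :=
    fun A v _ => image_compS_image T w v A
  rw [← himg]
  exact (hL.squeezed_of_straddle ha' hab' hb' hstr).imp
    (SqueezedInCell.image hw (hprefix _))
    (SqueezedInCellPair.image hw (hL.isSimilaritySystem.injective_compS hw).injOn
      (fun _ hv => hL.image_compS_subset hv) (hprefix _) (hprefix _))

end IsLinearZipper

namespace IsStructuralParam

variable {X : Type*} [MetricSpace X] {m : ℕ} {S : ℕ → X → X} {T : ℕ → ℝ → ℝ} {rT : ℕ → ℝ}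
  {t : ℕ → ℝ} {ε : ℕ → ℕ} {z : ℕ → X} {h : ℝ → X}

theorem compS_apply (hh : IsStructuralParam m S T t z h) (hL : IsLinearZipper m T rT t ε)
    {v : List ℕ} (hv : ∀ j ∈ v, j < m) {x : ℝ} (hx : x ∈ Icc (0 : ℝ) 1) :
    compS S v (h x) = h (compS T v x) := by
  induction v with
  | nil => rfl
  | cons i v ih =>
    rw [List.forall_mem_cons] at hv
    simp only [compS_cons, Function.comp_apply, ih hv.2]
    exact hh.2.2 i hv.1 _ (hL.image_compS_subset hv.2 (mem_image_of_mem _ hx))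

theorem image_compS_comm (hh : IsStructuralParam m S T t z h) (hL : IsLinearZipper m T rT t ε)
    {v : List ℕ} (hv : ∀ j ∈ v, j < m) {A : Set ℝ} (hA : A ⊆ Icc 0 1) :
    h '' (compS T v '' A) = compS S v '' (h '' A) := by
  simp only [image_image]
  exact image_congr fun x hx => (hh.compS_apply hL hv (hA hx)).symm

theorem squeezed_image_uIcc (hh : IsStructuralParam m S T t z h)
    (hL : IsLinearZipper m T rT t ε) (hinj : InjOn h (Icc 0 1)) {a b : ℝ}
    (ha : a ∈ Icc (0 : ℝ) 1) (hb : b ∈ Icc (0 : ℝ) 1) (hab : a ≠ b) :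
    SqueezedInCell m S (h '' Icc 0 1) (h '' uIcc a b) ∨
      SqueezedInCellPair m S (h '' Icc 0 1) {z 0, z m} (h '' uIcc a b) := by
  have hK : ∀ v, (∀ j ∈ v, j < m) →
      h '' (compS T v '' Icc 0 1) = compS S ([] ++ v) '' (h '' Icc 0 1) :=
    fun v hv => hh.image_compS_comm hL hv subset_rfl
  have hE : h '' {0, 1} = {z 0, z m} := by
    rw [image_pair, ← hL.t_zero, ← hh.2.1 0 (Nat.zero_le m), ← hh.2.1 m le_rfl, hL.t_eq_one]
  rw [← hE]
  exact (hL.squeezed_Icc (le_min ha.1 hb.1) (min_lt_max.2 hab) (max_le ha.2 hb.2)).imp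
    (SqueezedInCell.image (w₀ := []) (by simp) hK)
    (SqueezedInCellPair.image (w₀ := []) (by simp) hinj
      (fun _ hv => hL.image_compS_subset hv) hK fun v hv => hh.image_compS_comm hL hv
        (pair_subset (left_mem_Icc.2 zero_le_one) (right_mem_Icc.2 zero_le_one)))

end IsStructuralParam

namespace IsArcParam

variable {X : Type*} [MetricSpace X]

theorem exists_reparam {γ : Set X} {g h : ℝ → X} (hg : IsArcParam γ g)
    (hh : IsArcParam γ h) :
    ∃ φ : ℝ → ℝ, ContinuousOn φ (Icc 0 1) ∧ MapsTo φ (Icc 0 1) (Icc 0 1) ∧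
      ∀ x ∈ Icc (0 : ℝ) 1, h (φ x) = g x := by
  -- `h` is a homeomorphism from the compact `[0,1]` onto `γ`, and `φ` extends `h⁻¹ ∘ g`
  have : CompactSpace (Icc (0 : ℝ) 1) := isCompact_iff_compactSpace.1 isCompact_Icc
  have hbij : BijOn h (Icc 0 1) γ := hh.2.2 ▸ hh.2.1.bijOn_image
  let e : Icc (0 : ℝ) 1 ≃ₜ γ :=
    Continuous.homeoOfEquivCompactToT2 (f := hbij.equiv h) (hh.1.mapsToRestrict hbij.mapsTo)
  have hgγ : MapsTo g (Icc 0 1) γ := hg.2.2 ▸ mapsTo_image g _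
  let ψ : Icc (0 : ℝ) 1 → Icc (0 : ℝ) 1 := fun x => e.symm (hgγ.restrict g _ _ x)
  have hψ : Continuous ψ := e.symm.continuous.comp (hg.1.mapsToRestrict hgγ)
  refine ⟨IccExtend zero_le_one (Subtype.val ∘ ψ),
    (continuous_IccExtend_iff.2 (continuous_subtype_val.comp hψ)).continuousOn,
    fun x hx => ?_, fun x hx => ?_⟩
  · rw [IccExtend_of_mem _ _ hx]
    exact (ψ _).2
  · rw [IccExtend_of_mem _ _ hx]
    exact congrArg Subtype.val (e.apply_symm_apply (hgγ.restrict g _ _ ⟨x, hx⟩))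

theorem exists_image_uIcc_eq {γ : Set X} {g h : ℝ → X} (hg : IsArcParam γ g)
    (hh : IsArcParam γ h) {s u : ℝ} (hs : s ∈ Icc (0 : ℝ) 1) (hu : u ∈ Icc (0 : ℝ) 1) :
    ∃ a ∈ Icc (0 : ℝ) 1, ∃ b ∈ Icc (0 : ℝ) 1,
      h a = g s ∧ h b = g u ∧ g '' uIcc s u = h '' uIcc a b := by
  obtain ⟨φ, hφc, hφ01, hhφ⟩ := hg.exists_reparam hh
  have hsu : uIcc s u ⊆ Icc 0 1 := uIcc_subset_Icc hs hu
  have hφi : InjOn φ (Icc 0 1) := fun x hx y hy hxy =>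
    hg.2.1 hx hy (by rw [← hhφ x hx, ← hhφ y hy, hxy])
  refine ⟨φ s, hφ01 hs, φ u, hφ01 hu, hhφ s hs, hhφ u hu, ?_⟩
  rw [← (hφc.mono hsu).image_uIcc_of_injOn (hφi.mono hsu), image_image]
  exact image_congr fun x hx => (hhφ x (hsu hx)).symm

end IsArcParam

/-- dichotomy for subarcs of the attractor of a Jordan zipper of bounded
turning: every subarc `γ_{xy}` either is squeezed between a cell `γ_{i i_{k+1}}` and the
cell `γ_i`, or between a union of two extended cells and a union of two adjacent cells;
in both cases `p_i ≤ M‖x-y‖/(|γ| p_min)`. -/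
theorem subarc_dichotomy {n : ℕ} (m : ℕ)
    (S : ℕ → EuclideanSpace ℝ (Fin n) → EuclideanSpace ℝ (Fin n)) (p : ℕ → ℝ)
    (z : ℕ → EuclideanSpace ℝ (Fin n)) (ε : ℕ → ℕ)
    (γ : Set (EuclideanSpace ℝ (Fin n)))
    (hS : IsJordanZipper m S p z ε γ)
    (M : ℝ) (hγ : BoundedTurning γ M)
    (pmin : ℝ) (hpmin : IsLeast (p '' {i | i < m}) pmin)
    (g : ℝ → EuclideanSpace ℝ (Fin n)) (hg : IsArcParam γ g)
    (s u : ℝ) (hs : s ∈ Icc (0:ℝ) 1) (hu : u ∈ Icc (0:ℝ) 1)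
    (hxy : g s ≠ g u) :
    (∃ (l : List ℕ) (i₁ : ℕ), (∀ j ∈ l, j < m) ∧ i₁ < m ∧
        compS S (l ++ [i₁]) '' γ ⊆ g '' uIcc s u ∧ g '' uIcc s u ⊆ compS S l '' γ ∧
        ratioProd p l ≤ M * dist (g s) (g u) / (diam γ * pmin)) ∨
    (∃ (l₁ l₂ : List ℕ) (i₁ j₁ : ℕ), (∀ j ∈ l₁, j < m) ∧ (∀ j ∈ l₂, j < m) ∧
        i₁ < m ∧ j₁ < m ∧
        (∃ pt, compS S l₁ '' γ ∩ compS S l₂ '' γ = {pt} ∧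
          pt ∈ compS S l₁ '' ({z 0, z m} : Set (EuclideanSpace ℝ (Fin n))) ∧
          pt ∈ compS S l₂ '' ({z 0, z m} : Set (EuclideanSpace ℝ (Fin n)))) ∧
        compS S (l₁ ++ [i₁]) '' γ ∪ compS S (l₂ ++ [j₁]) '' γ ⊆ g '' uIcc s u ∧
        g '' uIcc s u ⊆ compS S l₁ '' γ ∪ compS S l₂ '' γ ∧
        compS S (l₁ ++ [i₁]) '' γ ∩ compS S (l₂ ++ [j₁]) '' γ
          = compS S l₁ '' γ ∩ compS S l₂ '' γ ∧
        ratioProd p l₁ ≤ M * dist (g s) (g u) / (diam γ * pmin) ∧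
        ratioProd p l₂ ≤ M * dist (g s) (g u) / (diam γ * pmin)) := by
  obtain ⟨hZ, hA, T, rT, t, h, hL, hh, hinj, him⟩ := hS
  obtain ⟨a, ha, b, hb, hha, hhb, hU⟩ := hg.exists_image_uIcc_eq ⟨hh.1, hinj, him⟩ hs hu
  have hsq := hh.squeezed_image_uIcc hL hinj ha hb fun hab => hxy (by rw [← hha, ← hhb, hab])
  rw [him, ← hU] at hsq
  have hγU : g '' uIcc s u ⊆ γ := hg.2.2 ▸ image_mono (uIcc_subset_Icc hs hu)
  have hdiam : 0 < diam γ := (dist_pos.2 hxy).trans_le <| dist_le_diam_of_mem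
    hA.2.1.isBounded (hγU (mem_image_of_mem g left_mem_uIcc))
    (hγU (mem_image_of_mem g right_mem_uIcc))
  have hbound : ∀ w i, (∀ j ∈ w, j < m) → i < m → compS S (w ++ [i]) '' γ ⊆ g '' uIcc s u →
      ratioProd p w ≤ M * dist (g s) (g u) / (diam γ * pmin) := fun w i hw hi hsub =>
    hZ.2.1.ratioProd_le_of_image_subset (hA.2.1.isBounded.subset hγU) hw hi hsub hpmin hdiam
      (hγ.2 g hg s hs u hu)
  rcases hsq with ⟨w, i, hw, hi, hsub, hsup⟩ |
    ⟨w₁, w₂, i₁, j₁, hw₁, hw₂, hi₁, hj₁, hpt, hsub, hsup, hcap⟩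
  · exact Or.inl ⟨w, i, hw, hi, hsub, hsup, hbound w i hw hi hsub⟩
  · exact Or.inr ⟨w₁, w₂, i₁, j₁, hw₁, hw₂, hi₁, hj₁, hpt, hsub, hsup, hcap,
      hbound w₁ i₁ hw₁ hi₁ (subset_union_left.trans hsub),
      hbound w₂ j₁ hw₂ hj₁ (subset_union_right.trans hsub)⟩
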